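/- Let k_e > 0 and let Ω₀ : [0,∞) → ℝ³ be continuous and bounded. Let k_P > 0, let K_D ∈ ℝ^{3×3} be positive definite and symmetric, and let ε satisfy 0 < ε < min{ √k_P, 4k_P·λ_min(K_D) / (4k_P + λ_max(K_D)²) }. Then there exist constants C > 0 and λ > 0 such that every solution (Z_s, z, ω) : [0,∞) → Sym(ℝ^{3×3}) × ℝ³ × ℝ³ of the closed-loop system Ż_s = [Z_s, Ω̂₀(t)] − 2k_e Z_s, ż = z × Ω₀(t) + ω, ω̇ = −k_P z − K_D ω − ε (z × Ω₀(t)), satisfies ‖Z_s(t)‖ + ‖z(t)‖ + ‖ω(t)‖ ≤ C·e^{−λt}·(‖Z_s(0)‖ + ‖z(0)‖ + ‖ω(0)‖) for all t ≥ 0. -/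

import Mathlib

open Matrix

attribute [local instance] Matrix.frobeniusNormedAddCommGroup Matrix.frobeniusNormedSpace

noncomputable section

abbrev Mat3 := Matrix (Fin 3) (Fin 3) ℝ

/-- Frobenius inner product. -/
def finner (A B : Mat3) : ℝ := (Aᵀ * B).trace

/-- Euclidean norm on ℝ³. -/
def enorm3 (v : Fin 3 → ℝ) : ℝ := Real.sqrt (∑ i, v i ^ 2)

/-- The hat map. -/
def hat (v : Fin 3 → ℝ) : Mat3 :=
  !![0, -v 2, v 1; v 2, 0, -v 0; -v 1, v 0, 0]

/-- The vee map, inverse of the hat map on skew-symmetric matrices. -/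
def vee (A : Mat3) : Fin 3 → ℝ := ![A 2 1, A 0 2, A 1 0]

/-- The cross product on ℝ³. -/
def cross (u v : Fin 3 → ℝ) : Fin 3 → ℝ :=
  ![u 1 * v 2 - u 2 * v 1, u 2 * v 0 - u 0 * v 2, u 0 * v 1 - u 1 * v 0]

/-- Symmetrization operator. -/
def symPart (A : Mat3) : Mat3 := (2⁻¹ : ℝ) • (A + Aᵀ)

/-- Skew-symmetrization operator. -/
def skewPart (A : Mat3) : Mat3 := (2⁻¹ : ℝ) • (A - Aᵀ)

/-- `SO(3)`: rotation matrices. -/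
def SO3 : Set Mat3 := {R | Rᵀ * R = 1 ∧ 0 < R.det}

/-- The matrix commutator. -/
def mcomm (A B : Mat3) : Mat3 := A * B - B * A

/-- A real square matrix is Hurwitz if every complex eigenvalue (root of its
characteristic polynomial over ℂ) has negative real part. -/
def IsHurwitzMat {n : Type*} [Fintype n] [DecidableEq n] (M : Matrix n n ℝ) : Prop :=
  ∀ μ : ℂ, (M.map (algebraMap ℝ ℂ)).charpoly.eval μ = 0 → μ.re < 0

/-- A real polynomial is Hurwitz if all of its complex roots have negative real part. -/
def IsHurwitzPoly (p : Polynomial ℝ) : Prop :=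
  ∀ μ : ℂ, (p.map (algebraMap ℝ ℂ)).eval μ = 0 → μ.re < 0

/-!
The three error components decouple. Since `Z_s` is symmetric, `tr(Z_s [Z_s, Ω̂₀]ᵀ) = 0`, so
`‖Z_s‖²` decays exactly at rate `4 k_e`. For `(z, ω)` one uses the energy
`V = k_P/2 |z|² + 1/2 |ω|² + ε z·ω`: along solutions the `Ω₀`-terms cancel (`z ⊥ z × Ω₀`, and the
two terms `ω·(z × Ω₀)` come with opposite signs), leaving
`V̇ = -ω·K_D ω + ε |ω|² - ε k_P |z|² - ε z·K_D ω`. The bound `ε < √k_P` makes `V` equivalent to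
`|z|² + |ω|²`; bounding `V̇` through `λ_min`, `λ_max` and Cauchy–Schwarz gives a quadratic form in
`(|z|, |ω|)` whose discriminant is negative exactly under the second bound on `ε`, so
`V̇ ≤ -μ (|z|² + |ω|²)` and a Grönwall argument yields exponential decay.
-/

theorem le_mul_exp_of_hasDerivAt_le {f f' : ℝ → ℝ} {k : ℝ}
    (hf : ∀ t, 0 ≤ t → HasDerivAt f (f' t) t) (hf' : ∀ t, 0 ≤ t → f' t ≤ -k * f t)
    {t : ℝ} (ht : 0 ≤ t) : f t ≤ f 0 * Real.exp (-k * t) := by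
  have hg : ∀ s, 0 ≤ s → HasDerivAt (fun s => f s * Real.exp (k * s))
      (f' s * Real.exp (k * s) + f s * (Real.exp (k * s) * k)) s := fun s hs =>
    (hf s hs).mul (by simpa using ((hasDerivAt_id s).const_mul k).exp)
  have hanti : AntitoneOn (fun s => f s * Real.exp (k * s)) (Set.Ici 0) := by
    refine antitoneOn_of_hasDerivWithinAt_nonpos (convex_Ici 0)
      (fun s hs => (hg s hs).continuousAt.continuousWithinAt)
      (fun s hs => (hg s (interior_subset hs)).hasDerivWithinAt) fun s hs => ?_
    nlinarith [hf' s (interior_subset hs), Real.exp_pos (k * s)]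
  have hmono : f t * Real.exp (k * t) ≤ f 0 := by simpa using hanti Set.self_mem_Ici ht ht
  calc f t = f t * Real.exp (k * t) * Real.exp (-k * t) := by
        rw [mul_assoc, ← Real.exp_add, neg_mul, add_neg_cancel, Real.exp_zero, mul_one]
    _ ≤ f 0 * Real.exp (-k * t) := by gcongr

theorem le_mul_exp_of_lyapunov {S V V' : ℝ → ℝ} {c₁ c₂ μ k : ℝ} (hk : 0 ≤ k) (hkμ : k * c₂ ≤ μ)
    (hS : ∀ t, 0 ≤ S t) (hlow : ∀ t, c₁ * S t ≤ V t) (hup : ∀ t, V t ≤ c₂ * S t)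
    (hV : ∀ t, 0 ≤ t → HasDerivAt V (V' t) t) (hV' : ∀ t, 0 ≤ t → V' t ≤ -μ * S t)
    {t : ℝ} (ht : 0 ≤ t) : c₁ * S t ≤ c₂ * Real.exp (-k * t) * S 0 := by
  have hdecay := le_mul_exp_of_hasDerivAt_le (k := k) hV (fun s hs => by
    nlinarith [hV' s hs, mul_le_mul_of_nonneg_left (hup s) hk,
      mul_le_mul_of_nonneg_right hkμ (hS s)]) ht
  calc c₁ * S t ≤ V 0 * Real.exp (-k * t) := (hlow t).trans hdecay
    _ ≤ c₂ * S 0 * Real.exp (-k * t) := by gcongr; exact hup 0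
    _ = c₂ * Real.exp (-k * t) * S 0 := by ring

theorem add_le_mul_exp_of_sq_add_sq_le {a b a₀ b₀ c₁ c₂ l t : ℝ} (ha₀ : 0 ≤ a₀) (hb₀ : 0 ≤ b₀)
    (hc₁ : 0 < c₁) (hc₂ : 0 ≤ c₂)
    (h : c₁ * (a ^ 2 + b ^ 2) ≤ c₂ * Real.exp (-(2 * l) * t) * (a₀ ^ 2 + b₀ ^ 2)) :
    a + b ≤ √(2 * c₂ / c₁) * Real.exp (-l * t) * (a₀ + b₀) := by
  refine le_of_pow_le_pow_left₀ two_ne_zero (by positivity) ?_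
  have hexp : Real.exp (-l * t) ^ 2 = Real.exp (-(2 * l) * t) := by
    rw [← Real.exp_nat_mul]; ring_nf
  have hsq : a ^ 2 + b ^ 2 ≤ c₂ / c₁ * Real.exp (-(2 * l) * t) * (a₀ + b₀) ^ 2 := by
    rw [div_mul_eq_mul_div, div_mul_eq_mul_div, le_div_iff₀ hc₁]
    nlinarith [mul_nonneg (mul_nonneg hc₂ (Real.exp_pos (-(2 * l) * t)).le) (mul_nonneg ha₀ hb₀)]
  rw [mul_pow, mul_pow, Real.sq_sqrt (by positivity), hexp, mul_div_assoc]
  nlinarith [sq_nonneg (a - b)]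

theorem add_le_mul_exp_min {a b a₀ b₀ C l₁ l₂ t : ℝ} (ht : 0 ≤ t) (ha₀ : 0 ≤ a₀) (hb₀ : 0 ≤ b₀)
    (hC : 0 ≤ C) (ha : a ≤ Real.exp (-l₁ * t) * a₀) (hb : b ≤ C * Real.exp (-l₂ * t) * b₀) :
    a + b ≤ (1 + C) * Real.exp (-min l₁ l₂ * t) * (a₀ + b₀) := by
  have h₁ : Real.exp (-l₁ * t) ≤ Real.exp (-min l₁ l₂ * t) := by gcongr; exact min_le_left _ _
  have h₂ : Real.exp (-l₂ * t) ≤ Real.exp (-min l₁ l₂ * t) := by gcongr; exact min_le_right _ _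
  nlinarith [mul_le_mul_of_nonneg_right h₁ ha₀, mul_le_mul_of_nonneg_right h₂ (mul_nonneg hC hb₀),
    mul_nonneg (Real.exp_pos (-min l₁ l₂ * t)).le (mul_nonneg hC ha₀),
    mul_nonneg (Real.exp_pos (-min l₁ l₂ * t)).le hb₀]

/-- The quadratic form `α x² - β x y + γ y²` written in `X = x²`, `Y = y²`, with `q` standing
for the cross term `β x y`; the constant is positive exactly when the discriminant is negative. -/
theorem quadratic_form_ge {α β γ X Y q : ℝ} (hαγ : 0 < α + γ) (hX : 0 ≤ X) (hY : 0 ≤ Y)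
    (hq : q ^ 2 ≤ β ^ 2 * (X * Y)) :
    (4 * α * γ - β ^ 2) / (4 * (α + γ)) * (X + Y) ≤ α * X + γ * Y - q := by
  set μ := (4 * α * γ - β ^ 2) / (4 * (α + γ))
  have hμ : μ * (4 * (α + γ)) = 4 * α * γ - β ^ 2 := div_mul_cancel₀ _ (by positivity)
  have hμα : μ ≤ α := le_of_mul_le_mul_right (a := 4 * (α + γ))
    (by nlinarith [sq_nonneg α, sq_nonneg β]) (by positivity)
  have hμγ : μ ≤ γ := le_of_mul_le_mul_right (a := 4 * (α + γ))
    (by nlinarith [sq_nonneg γ, sq_nonneg β]) (by positivity)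
  have hβμ : β ^ 2 ≤ 4 * (α - μ) * (γ - μ) := by nlinarith [sq_nonneg μ]
  have hP : 0 ≤ (α - μ) * X + (γ - μ) * Y := by
    nlinarith [mul_nonneg (sub_nonneg.2 hμα) hX, mul_nonneg (sub_nonneg.2 hμγ) hY]
  have hqP : q ^ 2 ≤ ((α - μ) * X + (γ - μ) * Y) ^ 2 := by
    nlinarith [sq_nonneg ((α - μ) * X - (γ - μ) * Y), mul_nonneg hX hY]
  nlinarith [abs_le_of_sq_le_sq' hqP hP]

theorem real_dotProduct_self_nonneg {ι : Type*} [Fintype ι] (v : ι → ℝ) : 0 ≤ v ⬝ᵥ v := by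
  simpa using dotProduct_star_self_nonneg v

theorem dotProduct_sq_le {ι : Type*} [Fintype ι] (u v : ι → ℝ) :
    (u ⬝ᵥ v) ^ 2 ≤ (u ⬝ᵥ u) * (v ⬝ᵥ v) := by
  simpa [dotProduct, sq] using Finset.sum_mul_sq_le_sq_mul_sq Finset.univ u v

theorem HasDerivAt.dotProduct {ι : Type*} [Fintype ι] {x y : ℝ → ι → ℝ} {x' y' : ι → ℝ} {t : ℝ}
    (hx : HasDerivAt x x' t) (hy : HasDerivAt y y' t) :
    HasDerivAt (fun s => x s ⬝ᵥ y s) (x' ⬝ᵥ y t + x t ⬝ᵥ y') t := by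
  simpa [_root_.dotProduct, Finset.sum_add_distrib] using HasDerivAt.fun_sum (u := Finset.univ)
    fun i _ => (hasDerivAt_pi.1 hx i).mul (hasDerivAt_pi.1 hy i)

theorem enorm3_sq (v : Fin 3 → ℝ) : enorm3 v ^ 2 = v ⬝ᵥ v := by
  rw [enorm3, Real.sq_sqrt (by positivity)]
  simp [dotProduct, sq]

theorem dotProduct_cross_self (u v : Fin 3 → ℝ) : u ⬝ᵥ cross u v = 0 := by
  simp [cross, dotProduct, Fin.sum_univ_three]; ring

theorem Matrix.dotProduct_mulVec_self_of_transpose_mul_self {m n : Type*} [Fintype m] [Fintype n]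
    [DecidableEq n] {U : Matrix m n ℝ} (hU : Uᵀ * U = 1) (x : n → ℝ) :
    (U *ᵥ x) ⬝ᵥ (U *ᵥ x) = x ⬝ᵥ x := by
  rw [dotProduct_mulVec, ← mulVec_transpose, mulVec_mulVec, hU, one_mulVec]

namespace Matrix.IsHermitian

variable {n : Type*} [Fintype n] [DecidableEq n] {A : Matrix n n ℝ}

theorem exists_eigencoordinates (hA : A.IsHermitian) (v : n → ℝ) :
    ∃ w : n → ℝ, w ⬝ᵥ w = v ⬝ᵥ v ∧ v ⬝ᵥ (A *ᵥ v) = ∑ i, hA.eigenvalues i * w i ^ 2 ∧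
      (A *ᵥ v) ⬝ᵥ (A *ᵥ v) = ∑ i, hA.eigenvalues i ^ 2 * w i ^ 2 := by
  set U : Matrix n n ℝ := (hA.eigenvectorUnitary : Matrix n n ℝ)
  have hUU : Uᵀ * U = 1 := by
    simpa [U, star_eq_conjTranspose] using Unitary.coe_star_mul_self hA.eigenvectorUnitary
  have hUU' : Uᵀᵀ * Uᵀ = 1 := by
    simpa [U, star_eq_conjTranspose] using Unitary.coe_mul_star_self hA.eigenvectorUnitary
  have hAv : A *ᵥ v = U *ᵥ (diagonal hA.eigenvalues *ᵥ (Uᵀ *ᵥ v)) := by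
    conv_lhs => rw [hA.spectral_theorem]
    simp [U, star_eq_conjTranspose, mulVec_mulVec, Matrix.mul_assoc]
  refine ⟨Uᵀ *ᵥ v, dotProduct_mulVec_self_of_transpose_mul_self hUU' v, ?_, ?_⟩
  · rw [hAv, dotProduct_mulVec, ← mulVec_transpose]
    simp only [dotProduct, mulVec_diagonal]
    exact Finset.sum_congr rfl fun i _ => by ring
  · rw [hAv, dotProduct_mulVec_self_of_transpose_mul_self hUU]
    simp only [dotProduct, mulVec_diagonal]
    exact Finset.sum_congr rfl fun i _ => by ring

theorem mul_dotProduct_le_dotProduct_mulVec (hA : A.IsHermitian) {c : ℝ}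
    (hc : ∀ i, c ≤ hA.eigenvalues i) (v : n → ℝ) : c * (v ⬝ᵥ v) ≤ v ⬝ᵥ (A *ᵥ v) := by
  obtain ⟨w, hw, hAv, -⟩ := hA.exists_eigencoordinates v
  rw [← hw, hAv, dotProduct, Finset.mul_sum]
  exact Finset.sum_le_sum fun i _ => by nlinarith [hc i, sq_nonneg (w i)]

theorem mulVec_dotProduct_mulVec_le (hA : A.IsHermitian) {c : ℝ}
    (hc : ∀ i, |hA.eigenvalues i| ≤ c) (v : n → ℝ) : (A *ᵥ v) ⬝ᵥ (A *ᵥ v) ≤ c ^ 2 * (v ⬝ᵥ v) := by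
  obtain ⟨w, hw, -, hAv⟩ := hA.exists_eigencoordinates v
  rw [← hw, hAv, dotProduct, Finset.mul_sum]
  refine Finset.sum_le_sum fun i _ => ?_
  rw [← sq]
  exact mul_le_mul_of_nonneg_right (sq_le_sq' (abs_le.1 (hc i)).1 (abs_le.1 (hc i)).2) (sq_nonneg _)

end Matrix.IsHermitian

section Frobenius

variable {m n : Type*} [Fintype m] [Fintype n]

theorem Matrix.trace_mul_transpose_eq_sum (A B : Matrix m n ℝ) :
    (A * Bᵀ).trace = ∑ i, ∑ j, A i j * B i j := by
  simp [trace, mul_apply]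

theorem Matrix.frobenius_norm_sq_eq_trace (A : Matrix m n ℝ) : ‖A‖ ^ 2 = (A * Aᵀ).trace := by
  rw [frobenius_norm_def, trace_mul_transpose_eq_sum, ← Real.rpow_natCast,
    ← Real.rpow_mul (by positivity)]
  norm_num [← sq]

theorem HasDerivAt.matrix_entry {Z : ℝ → Matrix m n ℝ} {Z' : Matrix m n ℝ} {t : ℝ}
    (h : HasDerivAt Z Z' t) (i : m) (j : n) : HasDerivAt (fun s => Z s i j) (Z' i j) t :=
  (LinearMap.toContinuousLinearMap (Matrix.entryLinearMap ℝ ℝ i j)).hasFDerivAt.comp_hasDerivAt t h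

theorem HasDerivAt.frobenius_norm_sq {Z : ℝ → Matrix m n ℝ} {Z' : Matrix m n ℝ} {t : ℝ}
    (h : HasDerivAt Z Z' t) : HasDerivAt (fun s => ‖Z s‖ ^ 2) (2 * (Z t * Z'ᵀ).trace) t := by
  simp_rw [Matrix.frobenius_norm_sq_eq_trace, Matrix.trace_mul_transpose_eq_sum, Finset.mul_sum]
  refine HasDerivAt.fun_sum fun i _ => HasDerivAt.fun_sum fun j _ => ?_
  exact ((h.matrix_entry i j).fun_mul (h.matrix_entry i j)).congr_deriv (by ring)

end Frobenius

theorem trace_mul_transpose_mcomm_eq_zero {S : Mat3} (hS : Sᵀ = S) (H : Mat3) :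
    (S * (mcomm S H)ᵀ).trace = 0 := by
  rw [mcomm, transpose_sub, transpose_mul, transpose_mul, hS, Matrix.mul_sub, trace_sub,
    ← Matrix.mul_assoc, ← Matrix.mul_assoc, trace_mul_cycle S Hᵀ S, sub_self]

theorem frobenius_norm_le_exp_of_hasDerivAt_mcomm {Z H : ℝ → Mat3} {c : ℝ}
    (hsym : ∀ t, 0 ≤ t → (Z t)ᵀ = Z t)
    (hZ : ∀ t, 0 ≤ t → HasDerivAt Z (mcomm (Z t) (H t) - c • Z t) t) {t : ℝ} (ht : 0 ≤ t) :
    ‖Z t‖ ≤ Real.exp (-c * t) * ‖Z 0‖ := by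
  have hsq : ‖Z t‖ ^ 2 ≤ ‖Z 0‖ ^ 2 * Real.exp (-(2 * c) * t) := by
    refine le_mul_exp_of_hasDerivAt_le (fun s hs => (hZ s hs).frobenius_norm_sq) (fun s hs => ?_) ht
    rw [transpose_sub, transpose_smul, Matrix.mul_sub, trace_sub, Matrix.mul_smul, trace_smul,
      trace_mul_transpose_mcomm_eq_zero (hsym s hs), ← frobenius_norm_sq_eq_trace, smul_eq_mul]
    exact le_of_eq (by ring)
  refine le_of_pow_le_pow_left₀ two_ne_zero (by positivity) (hsq.trans_eq ?_)
  rw [mul_pow, ← Real.exp_nat_mul]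
  ring_nf

def feedbackEnergy {ι : Type*} [Fintype ι] (kP ε : ℝ) (z ω : ι → ℝ) : ℝ :=
  kP / 2 * (z ⬝ᵥ z) + 1 / 2 * (ω ⬝ᵥ ω) + ε * (z ⬝ᵥ ω)

section FeedbackEnergy

variable {ι : Type*} [Fintype ι] {kP ε : ℝ}

theorem feedbackEnergy_ge (hkP : 0 ≤ kP) (z ω : ι → ℝ) :
    (kP - ε ^ 2) / (2 * (kP + 1)) * (z ⬝ᵥ z + ω ⬝ᵥ ω) ≤ feedbackEnergy kP ε z ω := by
  have h := quadratic_form_ge (α := kP / 2) (γ := 1 / 2) (β := ε) (q := -(ε * (z ⬝ᵥ ω)))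
    (by positivity) (real_dotProduct_self_nonneg z) (real_dotProduct_self_nonneg ω)
    (by nlinarith [mul_le_mul_of_nonneg_left (dotProduct_sq_le z ω) (sq_nonneg ε)])
  convert h using 2
  · field_simp; ring
  · unfold feedbackEnergy; ring

theorem feedbackEnergy_le (hkP : 0 ≤ kP) (hε : 0 ≤ ε) (z ω : ι → ℝ) :
    feedbackEnergy kP ε z ω ≤ (kP + 1 + ε) / 2 * (z ⬝ᵥ z + ω ⬝ᵥ ω) := by
  have h : 2 * (z ⬝ᵥ ω) ≤ z ⬝ᵥ z + ω ⬝ᵥ ω := by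
    nlinarith [real_dotProduct_self_nonneg (z - ω), sub_dotProduct z ω (z - ω),
      dotProduct_sub z z ω, dotProduct_sub ω z ω, dotProduct_comm z ω]
  unfold feedbackEnergy
  nlinarith [mul_le_mul_of_nonneg_left h hε, mul_nonneg hkP (real_dotProduct_self_nonneg ω),
    real_dotProduct_self_nonneg z]

theorem HasDerivAt.feedbackEnergy {z ω : ℝ → ι → ℝ} {z' ω' : ι → ℝ} {t : ℝ}
    (hz : HasDerivAt z z' t) (hω : HasDerivAt ω ω' t) :
    HasDerivAt (fun s => feedbackEnergy kP ε (z s) (ω s))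
      (kP * (z t ⬝ᵥ z') + ω t ⬝ᵥ ω' + ε * (z' ⬝ᵥ ω t + z t ⬝ᵥ ω')) t := by
  refine ((((hz.dotProduct hz).const_mul (kP / 2)).add ((hω.dotProduct hω).const_mul (1 / 2))).add
    ((hz.dotProduct hω).const_mul ε)).congr_deriv ?_
  rw [dotProduct_comm z', dotProduct_comm ω']
  ring

end FeedbackEnergy

theorem closedLoop_energy_deriv_eq (kP ε : ℝ) (K : Matrix (Fin 3) (Fin 3) ℝ) (z ω Ω : Fin 3 → ℝ) :
    kP * (z ⬝ᵥ (cross z Ω + ω)) + ω ⬝ᵥ ((-kP) • z - K *ᵥ ω - ε • cross z Ω) +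
        ε * ((cross z Ω + ω) ⬝ᵥ ω + z ⬝ᵥ ((-kP) • z - K *ᵥ ω - ε • cross z Ω)) =
      -(ω ⬝ᵥ (K *ᵥ ω)) + ε * (ω ⬝ᵥ ω) - ε * kP * (z ⬝ᵥ z) - ε * (z ⬝ᵥ (K *ᵥ ω)) := by
  simp only [dotProduct_add, add_dotProduct, dotProduct_sub, dotProduct_smul, smul_eq_mul,
    dotProduct_cross_self]
  rw [dotProduct_comm (cross z Ω) ω, dotProduct_comm z ω]
  ring

theorem closedLoop_energy_deriv_le {n : Type*} [Fintype n] [DecidableEq n] {K : Matrix n n ℝ}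
    (hK : K.IsHermitian) {kP ε lmin lmax : ℝ} (hmin : ∀ i, lmin ≤ hK.eigenvalues i)
    (hmax : ∀ i, |hK.eigenvalues i| ≤ lmax) (hkP : 0 < kP) (hε : 0 < ε) (hεmin : ε < lmin)
    (z ω : n → ℝ) :
    -(ω ⬝ᵥ (K *ᵥ ω)) + ε * (ω ⬝ᵥ ω) - ε * kP * (z ⬝ᵥ z) - ε * (z ⬝ᵥ (K *ᵥ ω)) ≤
      -((4 * (ε * kP) * (lmin - ε) - (ε * lmax) ^ 2) / (4 * (ε * kP + (lmin - ε))) *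
        (z ⬝ᵥ z + ω ⬝ᵥ ω)) := by
  have hcross : (-(ε * (z ⬝ᵥ (K *ᵥ ω)))) ^ 2 ≤ (ε * lmax) ^ 2 * ((z ⬝ᵥ z) * (ω ⬝ᵥ ω)) := by
    have hKω := hK.mulVec_dotProduct_mulVec_le hmax ω
    nlinarith [mul_le_mul_of_nonneg_left (dotProduct_sq_le z (K *ᵥ ω)) (sq_nonneg ε),
      mul_le_mul_of_nonneg_left hKω (mul_nonneg (sq_nonneg ε) (real_dotProduct_self_nonneg z))]
  have h := quadratic_form_ge (α := ε * kP) (γ := lmin - ε) (β := ε * lmax) (by nlinarith)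
    (real_dotProduct_self_nonneg z) (real_dotProduct_self_nonneg ω) hcross
  nlinarith [hK.mul_dotProduct_le_dotProduct_mulVec hmin ω]

theorem closedLoop_exp_stable {K : Matrix (Fin 3) (Fin 3) ℝ} (hK : K.IsHermitian)
    {kP ε lmin lmax : ℝ} (hmin : ∀ i, lmin ≤ hK.eigenvalues i)
    (hmax : ∀ i, hK.eigenvalues i ≤ lmax) (hkP : 0 < kP) (hε : 0 < ε) (hεkP : ε ^ 2 < kP)
    (hεK : ε * (4 * kP + lmax ^ 2) < 4 * kP * lmin) (Ω : ℝ → Fin 3 → ℝ) :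
    ∃ C > (0 : ℝ), ∃ l > (0 : ℝ), ∀ z ω : ℝ → Fin 3 → ℝ,
      (∀ t, 0 ≤ t → HasDerivAt z (cross (z t) (Ω t) + ω t) t) →
      (∀ t, 0 ≤ t → HasDerivAt ω ((-kP) • z t - K *ᵥ ω t - ε • cross (z t) (Ω t)) t) →
      ∀ t, 0 ≤ t → enorm3 (z t) + enorm3 (ω t) ≤
        C * Real.exp (-l * t) * (enorm3 (z 0) + enorm3 (ω 0)) := by
  have hεmin : ε < lmin := by nlinarith [sq_nonneg lmax]
  have habs : ∀ i, |hK.eigenvalues i| ≤ lmax := fun i =>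
    abs_le.2 ⟨by linarith [hmin i, hmax i], hmax i⟩
  set c₁ := (kP - ε ^ 2) / (2 * (kP + 1))
  set c₂ := (kP + 1 + ε) / 2
  set μ := (4 * (ε * kP) * (lmin - ε) - (ε * lmax) ^ 2) / (4 * (ε * kP + (lmin - ε)))
  have hc₁ : 0 < c₁ := div_pos (by linarith) (by linarith)
  have hc₂ : 0 < c₂ := by positivity
  have hμ : 0 < μ := div_pos (by nlinarith) (by nlinarith)
  refine ⟨√(2 * c₂ / c₁), by positivity, μ / c₂ / 2, by positivity, ?_⟩
  intro z ω hz hω t ht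
  have hS := le_mul_exp_of_lyapunov (S := fun s => z s ⬝ᵥ z s + ω s ⬝ᵥ ω s)
    (V := fun s => feedbackEnergy kP ε (z s) (ω s)) (μ := μ) (k := 2 * (μ / c₂ / 2))
    (by positivity) (by rw [mul_div_cancel₀ _ two_ne_zero, div_mul_cancel₀ _ hc₂.ne'])
    (fun s => add_nonneg (real_dotProduct_self_nonneg _) (real_dotProduct_self_nonneg _))
    (fun s => feedbackEnergy_ge hkP.le _ _) (fun s => feedbackEnergy_le hkP.le hε.le _ _)
    (fun s hs => ((hz s hs).feedbackEnergy (hω s hs)).congr_deriv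
      (closedLoop_energy_deriv_eq kP ε K (z s) (ω s) (Ω s)))
    (fun s _ => (closedLoop_energy_deriv_le hK hmin habs hkP hε hεmin (z s) (ω s)).trans_eq
      (neg_mul _ _).symm)
    ht
  simp only [← enorm3_sq] at hS
  exact add_le_mul_exp_of_sq_add_sq_le (Real.sqrt_nonneg _) (Real.sqrt_nonneg _) hc₁ hc₂.le hS

theorem prop4_exp_stabilization_general (ke : ℝ) (hke : 0 < ke)
    (Ω₀ : ℝ → Fin 3 → ℝ)
    (kP : ℝ) (hkP : 0 < kP) (KD : Mat3) (hKD : KD.PosDef)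
    (lmin lmax : ℝ)
    (hlmin : IsLeast (Set.range hKD.1.eigenvalues) lmin)
    (hlmax : IsGreatest (Set.range hKD.1.eigenvalues) lmax)
    (ε : ℝ) (hε : 0 < ε)
    (hε' : ε < min (Real.sqrt kP) (4 * kP * lmin / (4 * kP + lmax ^ 2))) :
    ∃ C > (0:ℝ), ∃ lam > (0:ℝ),
      ∀ (Zs : ℝ → Mat3) (z ω : ℝ → Fin 3 → ℝ),
        (∀ t, 0 ≤ t → (Zs t)ᵀ = Zs t) →
        (∀ t, 0 ≤ t →
          HasDerivAt Zs (mcomm (Zs t) (hat (Ω₀ t)) - (2 * ke) • Zs t) t) →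
        (∀ t, 0 ≤ t → HasDerivAt z (cross (z t) (Ω₀ t) + ω t) t) →
        (∀ t, 0 ≤ t → HasDerivAt ω
          ((-kP) • z t - KD.mulVec (ω t) - ε • cross (z t) (Ω₀ t)) t) →
        ∀ t, 0 ≤ t →
          ‖Zs t‖ + enorm3 (z t) + enorm3 (ω t) ≤
            C * Real.exp (-lam * t) * (‖Zs 0‖ + enorm3 (z 0) + enorm3 (ω 0)) := by
  have hεkP : ε ^ 2 < kP := (Real.lt_sqrt hε.le).1 (hε'.trans_le (min_le_left _ _))
  have hεK : ε * (4 * kP + lmax ^ 2) < 4 * kP * lmin :=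
    (lt_div_iff₀ (by positivity)).1 (hε'.trans_le (min_le_right _ _))
  obtain ⟨C, hC, l, hl, hzω⟩ := closedLoop_exp_stable hKD.1 (fun i => hlmin.2 ⟨i, rfl⟩)
    (fun i => hlmax.2 ⟨i, rfl⟩) hkP hε hεkP hεK Ω₀
  refine ⟨1 + C, by positivity, min (2 * ke) l, lt_min (by positivity) hl, ?_⟩
  intro Zs z ω hsym hZ hz hω t ht
  rw [add_assoc, add_assoc]
  exact add_le_mul_exp_min ht (norm_nonneg _)
    (add_nonneg (Real.sqrt_nonneg _) (Real.sqrt_nonneg _)) hC.le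
    (frobenius_norm_le_exp_of_hasDerivAt_mcomm hsym hZ ht) (hzω z ω hz hω t ht)

/-- Proposition 4: the feedback `Δu = −k_P z − K_D ΔΩ − ε(z × Ω₀)` with
`0 < ε < min{√k_P, 4k_P λ_min(K_D)/(4k_P + λ_max(K_D)²)}` exponentially
stabilizes the origin of the linearized rigid body tracking error dynamics. -/
theorem prop4_exp_stabilization (ke : ℝ) (hke : 0 < ke)
    (Ω₀ : ℝ → Fin 3 → ℝ)
    (hΩ₀cont : ContinuousOn Ω₀ (Set.Ici 0))
    (hΩ₀bdd : ∃ M, ∀ t, 0 ≤ t → enorm3 (Ω₀ t) ≤ M)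
    (kP : ℝ) (hkP : 0 < kP) (KD : Mat3) (hKD : KD.PosDef)
    (lmin lmax : ℝ)
    (hlmin : IsLeast (Set.range hKD.1.eigenvalues) lmin)
    (hlmax : IsGreatest (Set.range hKD.1.eigenvalues) lmax)
    (ε : ℝ) (hε : 0 < ε)
    (hε' : ε < min (Real.sqrt kP) (4 * kP * lmin / (4 * kP + lmax ^ 2))) :
    ∃ C > (0:ℝ), ∃ lam > (0:ℝ),
      ∀ (Zs : ℝ → Mat3) (z ω : ℝ → Fin 3 → ℝ),
        (∀ t, 0 ≤ t → (Zs t)ᵀ = Zs t) →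
        (∀ t, 0 ≤ t →
          HasDerivAt Zs (mcomm (Zs t) (hat (Ω₀ t)) - (2 * ke) • Zs t) t) →
        (∀ t, 0 ≤ t → HasDerivAt z (cross (z t) (Ω₀ t) + ω t) t) →
        (∀ t, 0 ≤ t → HasDerivAt ω
          ((-kP) • z t - KD.mulVec (ω t) - ε • cross (z t) (Ω₀ t)) t) →
        ∀ t, 0 ≤ t →
          ‖Zs t‖ + enorm3 (z t) + enorm3 (ω t) ≤
            C * Real.exp (-lam * t) * (‖Zs 0‖ + enorm3 (z 0) + enorm3 (ω 0)) :=
  prop4_exp_stabilization_general ke hke Ω₀ kP hkP KD hKD lmin lmax hlmin hlmax ε hε hε'
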